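/- arXiv:2411.16591 — 4 statements merged into one kernel-verified Lean document; each statement's English description precedes it below -/
import Mathlib

section
/- Let f : ℝ → ℝ be continuous and l > 0. If ∫_{t-l}^{t} f(x) dx = ∫_{t}^{t+l} f(x) dx for all t ∈ ℝ and f is bounded (f(t) ∈ [0,1] for all t), then f is l-periodic, i.e., f(t+l) = f(t) for all t. -/
/-!
Differentiating the window identity `∫_{t-l}^t f = ∫_t^{t+l} f` in `t` gives
`f (t + l) - f t = f t - f (t - l)`, so the increments `f (t + l) - f t` are `l`-periodic and
`f (t + n l) = f t + n (f (t + l) - f t)`. A bounded arithmetic progression is constant,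
hence `f (t + l) = f t`.
-/

open MeasureTheory intervalIntegral

theorem Continuous.sub_eq_sub_of_integral_windows_eq {E : Type*} [NormedAddCommGroup E]
    [NormedSpace ℝ E] [CompleteSpace E] {f : ℝ → E} {l : ℝ} (hf : Continuous f)
    (h : ∀ t : ℝ, ∫ x in (t - l)..t, f x = ∫ x in t..(t + l), f x) (t : ℝ) :
    f (t + l) - f t = f t - f (t - l) := by
  set F : ℝ → E := fun s => ∫ x in (0 : ℝ)..s, f x
  have hF : ∀ s, HasDerivAt F (f s) s := fun s => (hf.integral_hasStrictDerivAt 0 s).hasDerivAt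
  have hFTC : ∀ a b, ∫ x in a..b, f x = F b - F a := fun a b =>
    integral_eq_sub_of_hasDerivAt (fun s _ => hF s) (hf.intervalIntegrable a b)
  have hzero : (fun s => (F (s + l) - F s) - (F s - F (s - l))) = fun _ => 0 := by
    funext s
    rw [← hFTC, ← hFTC, h, sub_self]
  have hderiv : HasDerivAt (fun s => (F (s + l) - F s) - (F s - F (s - l)))
      ((f (t + l) - f t) - (f t - f (t - l))) t :=
    (((hF (t + l)).comp_add_const t l).sub (hF t)).sub
      ((hF t).sub ((hF (t - l)).comp_sub_const t l))
  rw [hzero] at hderiv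
  exact sub_eq_zero.mp ((hasDerivAt_const t (0 : E)).unique hderiv).symm

theorem add_nsmul_eq_of_sub_eq_sub {G E : Type*} [AddCommGroup G] [AddCommGroup E] {f : G → E}
    {l : G} (h : ∀ t, f (t + l) - f t = f t - f (t - l)) (t : G) (n : ℕ) :
    f (t + n • l) = f t + n • (f (t + l) - f t) := by
  have hperiodic : ∀ n : ℕ, f (t + n • l + l) - f (t + n • l) = f (t + l) - f t := by
    intro n
    induction n with
    | zero => simp
    | succ n ih => rw [← ih, h, succ_nsmul, ← add_assoc, add_sub_cancel_right]
  induction n with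
  | zero => simp
  | succ n ih =>
    rw [succ_nsmul, ← add_assoc, ← sub_add_cancel (f (t + n • l + l)) (f (t + n • l)),
      hperiodic, ih, succ_nsmul]
    abel

theorem eq_zero_of_forall_abs_nsmul_le {α : Type*} [AddCommGroup α] [LinearOrder α]
    [IsOrderedAddMonoid α] [Archimedean α] {d C : α} (h : ∀ n : ℕ, |n • d| ≤ C) : d = 0 := by
  by_contra hd
  obtain ⟨n, hn⟩ := exists_lt_nsmul (abs_pos.mpr hd) C
  exact (h n).not_gt (by rwa [abs_nsmul])

theorem sliding_window_adversarial_periodic_general (f : ℝ → ℝ) (l : ℝ)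
    (hf : Continuous f) (hbd : ∀ t, f t ∈ Set.Icc (0:ℝ) 1)
    (h : ∀ t : ℝ, ∫ x in (t - l)..t, f x = ∫ x in t..(t + l), f x) :
    ∀ t : ℝ, f (t + l) = f t := by
  intro t
  have hprogression := add_nsmul_eq_of_sub_eq_sub (hf.sub_eq_sub_of_integral_windows_eq h) t
  refine sub_eq_zero.mp (eq_zero_of_forall_abs_nsmul_le (C := 1) fun n => ?_)
  rw [← add_sub_cancel_left (f t) (n • _), ← hprogression, abs_le]
  have hn := hbd (t + n • l)
  have h0 := hbd t
  constructor <;> linarith [hn.1, hn.2, h0.1, h0.2]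

theorem sliding_window_adversarial_periodic (f : ℝ → ℝ) (l : ℝ) (hl : 0 < l)
    (hf : Continuous f) (hbd : ∀ t, f t ∈ Set.Icc (0:ℝ) 1)
    (h : ∀ t : ℝ, ∫ x in (t - l)..t, f x = ∫ x in t..(t + l), f x) :
    ∀ t : ℝ, f (t + l) = f t :=
  sliding_window_adversarial_periodic_general f l hf hbd h
end

section
/- Let f : ℝ → ℝ be continuous, l > 0, and suppose f(t) = p(t) + t·q(t) where p, q are l-periodic continuous functions. Then for all t, ∫_{t-l}^{t} f(x) dx − ∫_{t}^{t+l} f(x) dx = −l·∫_{0}^{l} q(x) dx. In particular f satisfies ∫_{t-l}^t f = ∫_t^{t+l} f for all t if and only if ∫_0^l q = 0. -/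
open MeasureTheory intervalIntegral

theorem periodic_plus_linear_window_difference (f p q : ℝ → ℝ) (l : ℝ) (hl : 0 < l)
    (hp : Continuous p) (hq : Continuous q)
    (hpp : Function.Periodic p l) (hqp : Function.Periodic q l)
    (hf : ∀ t, f t = p t + t * q t) :
    (∀ t : ℝ,
        (∫ x in (t - l)..t, f x) - (∫ x in t..(t + l), f x) =
          -l * ∫ x in (0:ℝ)..l, q x) ∧
      ((∀ t : ℝ, ∫ x in (t - l)..t, f x = ∫ x in t..(t + l), f x) ↔
        (∫ x in (0:ℝ)..l, q x) = 0) := by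
  have hfc : Continuous f := by
    have : f = fun t => p t + t * q t := funext hf
    rw [this]; continuity
  have key : ∀ t : ℝ,
      (∫ x in (t - l)..t, f x) - (∫ x in t..(t + l), f x) =
        -l * ∫ x in (0:ℝ)..l, q x := by
    intro t
    have h1 : (∫ x in t..(t + l), f x) = ∫ x in (t - l)..t, f (x + l) := by
      rw [intervalIntegral.integral_comp_add_right]
      congr 1 <;> ring
    have h2 : ∀ x : ℝ, f (x + l) = f x + l * q x := by
      intro x
      rw [hf, hf, hpp, hqp]; ring
    have h3 : (∫ x in (t - l)..t, f (x + l)) =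
        (∫ x in (t - l)..t, f x) + l * ∫ x in (t - l)..t, q x := by
      simp only [h2]
      rw [intervalIntegral.integral_add (hfc.intervalIntegrable _ _)
        ((hq.intervalIntegrable _ _).const_mul l),
        intervalIntegral.integral_const_mul]
    have h4 : (∫ x in (t - l)..t, q x) = ∫ x in (0:ℝ)..l, q x := by
      have := hqp.intervalIntegral_add_eq (t - l) 0
      simpa [sub_add_cancel] using this
    rw [h1, h3, h4]; ring
  refine ⟨key, ?_, ?_⟩
  · intro h
    have := key 0
    rw [h 0, sub_self] at this
    have hl' : -l ≠ 0 := by linarith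
    exact (mul_eq_zero.mp this.symm).resolve_left hl'
  · intro h t
    have := key t
    rw [h, mul_zero, sub_eq_zero] at this
    exact this
end

section
/- Growing reference window characterization (proper case): let a, l > 0 and f : [0,∞) → ℝ continuous with 0 ≤ f ≤ 1. If (1/t)·∫_{0}^{t} f(x) dx = (1/l)·∫_{t}^{t+l} f(x) dx for all t ≥ a, then f is constant on [a,∞) with value equal to (1/a)·∫_{0}^{a} f(x) dx. -/
open MeasureTheory intervalIntegral Set Filter

/-! The hypothesis says that the running mean `G t = (1/t) ∫₀ᵗ f` satisfies `G (t + l) = G t`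
for `t ≥ a`, hence so does its derivative `G' t = (f t - G t) / t` for `t > a`. Together these
give `f (t + l) = f t + l G' t`, so `f (t + n l) = f t + n l G' t`; as `f` is bounded, `G' = 0`,
i.e. `f = G` on `(a, ∞)` and `G` is constant there. Continuity extends `f = G a` to `t = a`. -/

noncomputable def runningMean (f : ℝ → ℝ) (t : ℝ) : ℝ := (∫ x in (0:ℝ)..t, f x) / t

theorem eq_zero_of_forall_abs_nat_mul_le {c C : ℝ} (h : ∀ n : ℕ, |n * c| ≤ C) : c = 0 := by
  by_contra hc
  have hc' : 0 < |c| := abs_pos.mpr hc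
  obtain ⟨n, hn⟩ := exists_nat_gt (C / |c|)
  have := h n
  rw [abs_mul, Nat.abs_cast] at this
  rw [div_lt_iff₀ hc'] at hn
  linarith

theorem add_nat_mul_eq_of_forall_gt {u v : ℝ → ℝ} {a l : ℝ} (hl : 0 ≤ l)
    (hv : ∀ t, a < t → v (t + l) = v t) (hu : ∀ t, a < t → u (t + l) = u t + v t)
    {t : ℝ} (ht : a < t) (n : ℕ) : u (t + n * l) = u t + n * v t := by
  have hgt : ∀ n : ℕ, a < t + n * l := fun n => by nlinarith [(n.cast_nonneg : (0:ℝ) ≤ n)]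
  have hvn : ∀ n : ℕ, v (t + n * l) = v t := by
    intro n
    induction n with
    | zero => simp
    | succ n ih =>
      rw [Nat.cast_succ, add_one_mul, ← add_assoc, hv _ (hgt n), ih]
  induction n with
  | zero => simp
  | succ n ih =>
    rw [Nat.cast_succ, add_one_mul, ← add_assoc, hu _ (hgt n), ih, hvn]
    ring

theorem deriv_add_eq_of_forall_gt {g : ℝ → ℝ} {a l t : ℝ}
    (hper : ∀ s, a < s → g (s + l) = g s) (ht : a < t) : deriv g (t + l) = deriv g t := by
  rw [← deriv_comp_add_const]
  exact EventuallyEq.deriv_eq (eventually_of_mem (Ioi_mem_nhds ht) hper)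

section RunningMean

variable {f : ℝ → ℝ}

theorem intervalIntegrable_of_continuousOn_Ici (hf : ContinuousOn f (Ici 0)) {s t : ℝ}
    (hs : 0 ≤ s) (ht : 0 ≤ t) : IntervalIntegrable f volume s t :=
  (hf.mono fun _ hx => (le_inf hs ht).trans hx.1).intervalIntegrable

theorem hasDerivAt_integral_of_continuousOn_Ici (hf : ContinuousOn f (Ici 0)) {t : ℝ}
    (ht : 0 < t) : HasDerivAt (fun u => ∫ x in (0:ℝ)..u, f x) (f t) t :=
  integral_hasDerivAt_right (intervalIntegrable_of_continuousOn_Ici hf le_rfl ht.le)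
    ((hf.mono (Ioi_subset_Ici le_rfl)).stronglyMeasurableAtFilter isOpen_Ioi t ht)
    (hf.continuousAt (Ici_mem_nhds ht))

theorem hasDerivAt_runningMean (hf : ContinuousOn f (Ici 0)) {t : ℝ} (ht : 0 < t) :
    HasDerivAt (runningMean f) ((f t - runningMean f t) / t) t := by
  have hF := hasDerivAt_integral_of_continuousOn_Ici hf ht
  refine (hF.div (hasDerivAt_id' t) ht.ne').congr_deriv ?_
  simp only [runningMean]
  field_simp

theorem deriv_runningMean (hf : ContinuousOn f (Ici 0)) {t : ℝ} (ht : 0 < t) :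
    deriv (runningMean f) t = (f t - runningMean f t) / t :=
  (hasDerivAt_runningMean hf ht).deriv

theorem runningMean_add_eq (hf : ContinuousOn f (Ici 0)) {t l : ℝ} (ht : 0 < t) (hl : 0 < l)
    (h : (1 / t) * ∫ x in (0:ℝ)..t, f x = (1 / l) * ∫ x in t..(t + l), f x) :
    runningMean f (t + l) = runningMean f t := by
  have hsplit := integral_add_adjacent_intervals
    (intervalIntegrable_of_continuousOn_Ici hf le_rfl ht.le)
    (intervalIntegrable_of_continuousOn_Ici hf ht.le (by linarith : 0 ≤ t + l))
  simp only [runningMean, ← hsplit]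
  field_simp at h ⊢
  linarith

variable {a l : ℝ}

theorem add_eq_add_mul_deriv_runningMean (hf : ContinuousOn f (Ici 0)) (ha : 0 < a)
    (hl : 0 < l) (hper : ∀ s, a < s → runningMean f (s + l) = runningMean f s) {t : ℝ}
    (ht : a < t) : f (t + l) = f t + l * deriv (runningMean f) t := by
  have ht0 : 0 < t := ha.trans ht
  have hderiv := deriv_add_eq_of_forall_gt hper ht
  rw [deriv_runningMean hf ht0, deriv_runningMean hf (by linarith), hper t ht] at hderiv
  rw [deriv_runningMean hf ht0]
  field_simp at hderiv ⊢
  linarith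

theorem deriv_runningMean_eq_zero {m M : ℝ} (hf : ContinuousOn f (Ici 0)) (ha : 0 < a)
    (hl : 0 < l) (hbd : ∀ s, a < s → f s ∈ Icc m M)
    (hper : ∀ s, a < s → runningMean f (s + l) = runningMean f s) {t : ℝ} (ht : a < t) :
    deriv (runningMean f) t = 0 := by
  have hshift : ∀ n : ℕ, f (t + n * l) = f t + n * (l * deriv (runningMean f) t) :=
    add_nat_mul_eq_of_forall_gt hl.le
      (fun s hs => by rw [deriv_add_eq_of_forall_gt hper hs])
      (fun s hs => add_eq_add_mul_deriv_runningMean hf ha hl hper hs) ht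
  have hbounded : ∀ n : ℕ, |n * (l * deriv (runningMean f) t)| ≤ M - m := by
    intro n
    have hn := hbd (t + n * l) (by nlinarith [(n.cast_nonneg : (0:ℝ) ≤ n)])
    have h0 := hbd t ht
    rw [hshift n] at hn
    exact abs_le.mpr ⟨by linarith [hn.1, h0.2], by linarith [hn.2, h0.1]⟩
  exact (mul_eq_zero.mp (eq_zero_of_forall_abs_nat_mul_le hbounded)).resolve_left hl.ne'

theorem runningMean_eq_of_deriv_eq_zero (hf : ContinuousOn f (Ici 0)) (ha : 0 < a)
    (hD : ∀ s, a < s → deriv (runningMean f) s = 0) {t : ℝ} (ht : a < t) :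
    runningMean f t = runningMean f a := by
  have hderiv : ∀ x ∈ Ioo a t, HasDerivAt (runningMean f) 0 x := fun x hx =>
    hD x hx.1 ▸ (hasDerivAt_runningMean hf (ha.trans hx.1)).differentiableAt.hasDerivAt
  obtain ⟨_, _, hslope⟩ := exists_hasDerivAt_eq_slope (runningMean f) (fun _ => 0) ht
    (fun x hx => (hasDerivAt_runningMean hf (ha.trans_le hx.1)).continuousAt.continuousWithinAt)
    hderiv
  rw [eq_comm, div_eq_zero_iff, sub_eq_zero] at hslope
  exact hslope.resolve_right (sub_ne_zero.mpr ht.ne')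

theorem eq_runningMean_of_deriv_eq_zero (hf : ContinuousOn f (Ici 0)) {t : ℝ} (ht : 0 < t)
    (hD : deriv (runningMean f) t = 0) : f t = runningMean f t := by
  rw [deriv_runningMean hf ht, div_eq_zero_iff, sub_eq_zero] at hD
  exact hD.resolve_right ht.ne'

end RunningMean

theorem growing_reference_window_constant (f : ℝ → ℝ) (a l : ℝ)
    (ha : 0 < a) (hl : 0 < l) (hf : ContinuousOn f (Set.Ici 0))
    (hbd : ∀ t : ℝ, 0 ≤ t → 0 ≤ f t ∧ f t ≤ 1)
    (h : ∀ t : ℝ, a ≤ t →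
      (1 / t) * ∫ x in (0:ℝ)..t, f x = (1 / l) * ∫ x in t..(t + l), f x) :
    ∀ t : ℝ, a ≤ t → f t = (1 / a) * ∫ x in (0:ℝ)..a, f x := by
  have hper : ∀ s, a < s → runningMean f (s + l) = runningMean f s :=
    fun s hs => runningMean_add_eq hf (ha.trans hs) hl (h s hs.le)
  have hD : ∀ s, a < s → deriv (runningMean f) s = 0 := fun s hs =>
    deriv_runningMean_eq_zero hf ha hl (fun r hr => hbd r (ha.trans hr).le) hper hs
  have hconst : EqOn f (fun _ => runningMean f a) (Ioi a) := fun t ht => by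
    rw [eq_runningMean_of_deriv_eq_zero hf (ha.trans ht) (hD t ht),
      runningMean_eq_of_deriv_eq_zero hf ha hD ht]
  have hconst' : EqOn f (fun _ => runningMean f a) (Ici a) :=
    hconst.of_subset_closure (hf.mono (Ici_subset_Ici.mpr ha.le)) continuousOn_const
      Ioi_subset_Ici_self (closure_Ioi a).ge
  intro t ht
  rw [hconst' ht, runningMean, one_div_mul_eq_div]
end

section
/- Complete detection criterion: with Adv₀(𝒲) as above and Const the set of (a.e.) constant functions 𝒯 → [0,1], suppose Adv₀(𝒲) ⊆ Const. Then for any measurable family of probability measures (𝒟_t) on 𝒳 with 𝒟_{W₁} = 𝒟_{W₂} for all (W₁,W₂) ∈ 𝒲, the family has no drift, i.e., t ↦ 𝒟_t(S) is μ-a.e. constant for every measurable S. -/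
open MeasureTheory

/-- The set of (improper) adversarial functions for a windowing scheme `𝒲`. -/
def Adv0 {𝒯 : Type*} [MeasurableSpace 𝒯] (μ : Measure 𝒯)
    (𝒲 : Set (Set 𝒯 × Set 𝒯)) : Set (𝒯 → ℝ) :=
  {f | Measurable f ∧ (∀ t, f t ∈ Set.Icc (0:ℝ) 1) ∧
    ∀ p ∈ 𝒲, (μ p.2).toReal * ∫ t in p.1, f t ∂μ =
      (μ p.1).toReal * ∫ t in p.2, f t ∂μ}

theorem complete_detection_criterion {𝒯 𝒳 : Type*} [MeasurableSpace 𝒯] [MeasurableSpace 𝒳]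
    (μ : Measure 𝒯) (𝒲 : Set (Set 𝒯 × Set 𝒯))
    (hfin : ∀ p ∈ 𝒲, 0 < μ p.1 ∧ μ p.1 < ⊤ ∧ 0 < μ p.2 ∧ μ p.2 < ⊤)
    (hconst : ∀ f ∈ Adv0 μ 𝒲, ∃ c : ℝ, ∀ᵐ t ∂μ, f t = c)
    (D : 𝒯 → Measure 𝒳) (hprob : ∀ t, IsProbabilityMeasure (D t))
    (hmeas : ∀ S : Set 𝒳, MeasurableSet S → Measurable fun t => (D t S).toReal)
    (heq : ∀ p ∈ 𝒲, ∀ S : Set 𝒳, MeasurableSet S →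
      (μ p.1).toReal⁻¹ * ∫ t in p.1, (D t S).toReal ∂μ =
        (μ p.2).toReal⁻¹ * ∫ t in p.2, (D t S).toReal ∂μ) :
    ∀ S : Set 𝒳, MeasurableSet S → ∃ c : ℝ, ∀ᵐ t ∂μ, (D t S).toReal = c := by
  intro S hS
  apply hconst
  refine ⟨hmeas S hS, ?_, ?_⟩
  · intro t
    constructor
    · exact ENNReal.toReal_nonneg
    · have := (hprob t).measure_univ
      have h1 : D t S ≤ 1 := by
        calc D t S ≤ D t Set.univ := measure_mono (Set.subset_univ S)
        _ = 1 := (hprob t).measure_univ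
      calc (D t S).toReal ≤ (1 : ENNReal).toReal :=
            ENNReal.toReal_mono (by simp) h1
        _ = 1 := by simp
  · intro p hp
    obtain ⟨h1, h2, h3, h4⟩ := hfin p hp
    have e1 : (μ p.1).toReal ≠ 0 := by
      simp [ENNReal.toReal_eq_zero_iff, h1.ne', h2.ne]
    have e2 : (μ p.2).toReal ≠ 0 := by
      simp [ENNReal.toReal_eq_zero_iff, h3.ne', h4.ne]
    have h := heq p hp S hS
    field_simp at h
    linarith [h]
end
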